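/- If M is a sequence of real numbers such that d_DF(M, A^a) ≤ 1 and d_DF(M, B^b) ≤ 1, where A^a = ⟨1,(−3,1)^a⟩ and B^b = ⟨−1,(3,−1)^b⟩, then M contains exactly a maximal runs of values in [−4,−2] and exactly b maximal runs of values in [2,4], and these runs are disjoint. -/

import Mathlib

open Set

/-- One step of a traversal: increment one or both indices by 1. -/
def FrStep (p q : ℕ × ℕ) : Prop :=
  (q.1 = p.1 + 1 ∧ q.2 = p.2) ∨ (q.1 = p.1 ∧ q.2 = p.2 + 1) ∨ (q.1 = p.1 + 1 ∧ q.2 = p.2 + 1)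

/-- `T` is a traversal of two sequences of lengths `m` and `m'` (0-indexed):
it starts at `(0,0)`, ends at `(m-1, m'-1)`, and each step increments one or both indices. -/
def IsTraversal (m m' : ℕ) (T : List (ℕ × ℕ)) : Prop :=
  T ≠ [] ∧ T.head? = some (0, 0) ∧ T.getLast? = some (m - 1, m' - 1) ∧
    T.Chain' FrStep

/-- The discrete Fréchet distance between two finite point sequences:
the least `r` such that some traversal keeps all paired points within distance `r`. -/
noncomputable def dDF {α : Type*} [PseudoMetricSpace α] [Inhabited α]
    (P Q : List α) : ℝ :=
  sInf { r : ℝ | ∃ T : List (ℕ × ℕ), IsTraversal P.length Q.length T ∧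
    ∀ p ∈ T, dist (P.getD p.1 default) (Q.getD p.2 default) ≤ r }

/-- The two-letter alphabet `{A, B}`. -/
inductive AB : Type
  | A : AB
  | B : AB
deriving DecidableEq

/-- The sequence `⟨1, (−3, 1)^a⟩` with `a` occurrences of `−3`. -/
def Aseq (a : ℕ) : List ℝ := 1 :: (List.replicate a [(-3 : ℝ), 1]).flatten

/-- The sequence `⟨−1, (3, −1)^b⟩` with `b` occurrences of `3`. -/
def Bseq (b : ℕ) : List ℝ := -1 :: (List.replicate b [(3 : ℝ), -1]).flatten

/-- The middle-curve sequence representing a string `S` over `{A, B}`: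
each character maps to the pair `0, −2` (for `A`) or `0, 2` (for `B`),
and a final `0` is appended. -/
def MSeq (S : List AB) : List ℝ :=
  (S.map (fun c => [(0 : ℝ), match c with | AB.A => -2 | AB.B => 2])).flatten ++ [0]

/-!
A traversal witnessing `dDF M G ≤ r` against an alternating gadget `G = x, y, x, …, y, x` pairs every
entry of `M` with entries of `G`; an entry paired with `y` lies in `I`, one paired with `x` does not.
So along the traversal, `M i ∈ I` holds exactly when the paired position of `G` is odd. Since
traversals are monotone in both coordinates, two predicates matched in this way have equally many
maximal runs, and the odd positions of `G` form `n` runs of length one.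
-/

open Finset Metric

lemma exists_mem_apply_eq_of_isChain {α : Type*} {f : α → ℕ} :
    ∀ {l : List α} {a b : α}, l.IsChain (fun x y => f y ≤ f x + 1) →
      l.head? = some a → l.getLast? = some b → ∀ {v}, f a ≤ v → v ≤ f b → ∃ x ∈ l, f x = v
  | [], _, _, _, ha, _, _, _, _ => by simp at ha
  | [x], _, _, _, ha, hb, _, h₁, h₂ => by
    simp only [List.head?_cons, List.getLast?_singleton, Option.some.injEq] at ha hb
    subst ha hb
    exact ⟨x, List.mem_singleton_self x, by omega⟩
  | x :: y :: l, a, b, hc, ha, hb, v, h₁, h₂ => by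
    obtain rfl : x = a := by simpa using ha
    rw [List.isChain_cons_cons] at hc
    rcases h₁.eq_or_lt with h | h
    · exact ⟨x, List.mem_cons_self, h⟩
    · obtain ⟨z, hz, rfl⟩ := exists_mem_apply_eq_of_isChain hc.2 rfl
        (by rwa [List.getLast?_cons_cons] at hb) (by omega) h₂
      exact ⟨z, List.mem_cons_of_mem _ hz, rfl⟩

lemma FrStep.le {p q : ℕ × ℕ} (h : FrStep p q) : p ≤ q := by
  rcases h with ⟨h₁, h₂⟩ | ⟨h₁, h₂⟩ | ⟨h₁, h₂⟩ <;> exact Prod.le_def.2 ⟨by omega, by omega⟩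

lemma FrStep.swap {p q : ℕ × ℕ} (h : FrStep p q) : FrStep p.swap q.swap := by
  unfold FrStep at *
  simp only [Prod.fst_swap, Prod.snd_swap]
  tauto

lemma isTraversal_staircase (m g : ℕ) :
    IsTraversal m g ((List.range (m - 1 + (g - 1) + 1)).map fun t => (min t (m - 1), t - (m - 1))) := by
  refine ⟨by simp, by simp [List.head?_range], by simp [List.getLast?_range], ?_⟩
  show List.IsChain _ _
  rw [List.isChain_map, List.isChain_range_succ]
  intro t _
  simp only [FrStep]
  omega

namespace IsTraversal

variable {m g : ℕ} {T : List (ℕ × ℕ)}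

lemma swap (hT : IsTraversal m g T) : IsTraversal g m (T.map Prod.swap) := by
  obtain ⟨hne, hhead, hlast, hchain⟩ := hT
  refine ⟨by simpa using hne, by simp [hhead], by simp [hlast], ?_⟩
  exact List.isChain_map_of_isChain _ (fun _ _ h => h.swap) hchain

lemma pairwise_le (hT : IsTraversal m g T) : T.Pairwise (· ≤ ·) :=
  (hT.2.2.2.imp fun _ _ h => h.le).pairwise

lemma le_of_mem (hT : IsTraversal m g T) {p : ℕ × ℕ} (hp : p ∈ T) : p ≤ (m - 1, g - 1) := by
  have hT' := List.dropLast_append_getLast? _ hT.2.2.1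
  have hpw := hT.pairwise_le
  rw [← hT', List.pairwise_append] at hpw
  rw [← hT', List.mem_append, List.mem_singleton] at hp
  rcases hp with hp | rfl
  · exact hpw.2.2 p hp _ (List.mem_singleton_self _)
  · rfl

lemma snd_le_of_fst_lt (hT : IsTraversal m g T) {p q : ℕ × ℕ} (hp : p ∈ T) (hq : q ∈ T)
    (h : p.1 < q.1) : p.2 ≤ q.2 := by
  have hpw := hT.pairwise_le
  have : p ≤ q ∨ q ≤ p := List.Pairwise.forall_of_forall_of_flip (R := fun p q => p ≤ q ∨ q ≤ p)
    (fun _ _ => Or.inl le_rfl) (hpw.imp Or.inl) (hpw.imp Or.inr) hp hq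
  rcases this with h' | h'
  · exact h'.2
  · exact absurd h'.1 h.not_ge

lemma exists_mem_fst_eq (hT : IsTraversal m g T) {i : ℕ} (hi : i < m) : ∃ p ∈ T, p.1 = i :=
  exists_mem_apply_eq_of_isChain (hT.2.2.2.imp fun _ _ h => by rcases h with h | h | h <;> omega)
    hT.2.1 hT.2.2.1 (Nat.zero_le i) (by simp only; omega)

end IsTraversal

theorem exists_traversal_dist_le_dDF {α : Type*} [PseudoMetricSpace α] [Inhabited α]
    (P Q : List α) : ∃ T, IsTraversal P.length Q.length T ∧
      ∀ p ∈ T, dist (P.getD p.1 default) (Q.getD p.2 default) ≤ dDF P Q := by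
  classical
  set d : ℕ × ℕ → ℝ := fun p => dist (P.getD p.1 default) (Q.getD p.2 default)
  set D := (range (P.length + 1) ×ˢ range (Q.length + 1)).image d
  have hD : ∀ T, IsTraversal P.length Q.length T → ∀ p ∈ T, d p ∈ D := fun T hT p hp => by
    have := Prod.le_def.1 (hT.le_of_mem hp)
    exact mem_image_of_mem d (mem_product.2 ⟨mem_range.2 (by omega), mem_range.2 (by omega)⟩)
  obtain ⟨T₀, hT₀⟩ : ∃ T, IsTraversal P.length Q.length T := ⟨_, isTraversal_staircase _ _⟩
  have hne : D.Nonempty := ⟨_, hD T₀ hT₀ _ (List.mem_of_getLast? hT₀.2.2.1)⟩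
  have hS : {r : ℝ | ∃ T, IsTraversal P.length Q.length T ∧ ∀ p ∈ T, d p ≤ r}.Nonempty :=
    ⟨D.max' hne, T₀, hT₀, fun p hp => D.le_max' _ (hD T₀ hT₀ p hp)⟩
  by_contra! h
  -- every traversal costs at least the least value of `D` above `dDF P Q`
  set D' := D.filter (dDF P Q < ·)
  have hD' : ∀ T, IsTraversal P.length Q.length T → ∃ p ∈ T, d p ∈ D' := fun T hT => by
    obtain ⟨p, hp, hlt⟩ := h T hT
    exact ⟨p, hp, mem_filter.2 ⟨hD T hT p hp, hlt⟩⟩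
  have hne' : D'.Nonempty := let ⟨p, _, hp⟩ := hD' T₀ hT₀; ⟨_, hp⟩
  have hle : D'.min' hne' ≤ dDF P Q := le_csInf hS fun r ⟨T, hT, hr⟩ => by
    obtain ⟨p, hp, hpD'⟩ := hD' T hT
    exact (D'.min'_le _ hpD').trans (hr p hp)
  exact (mem_filter.1 (D'.min'_mem hne')).2.not_ge hle

open Classical in
noncomputable def runStarts (P : ℕ → Prop) (n : ℕ) : Finset ℕ :=
  {j ∈ range n | P j ∧ (j = 0 ∨ ¬ P (j - 1))}

open Classical in
/-- The start of the maximal run of `P` through `j`, when `P j` holds. -/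
noncomputable def runStart (P : ℕ → Prop) (j : ℕ) : ℕ :=
  Nat.findGreatest (fun i => i = 0 ∨ ¬ P (i - 1)) j

section Runs

variable {P Q : ℕ → Prop}

lemma mem_runStarts {n j : ℕ} : j ∈ runStarts P n ↔ j < n ∧ P j ∧ (j = 0 ∨ ¬ P (j - 1)) := by
  simp [runStarts]

lemma runStart_le (P : ℕ → Prop) (j : ℕ) : runStart P j ≤ j := by
  classical
  exact Nat.findGreatest_le j

lemma lt_runStart {i j : ℕ} (hi : ¬ P i) (hij : i < j) : i < runStart P j := by
  classical
  exact Nat.le_findGreatest (P := fun i => i = 0 ∨ ¬ P (i - 1)) hij (Or.inr hi)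

lemma runStart_mem_runStarts {j n : ℕ} (hj : P j) (hjn : j < n) : runStart P j ∈ runStarts P n := by
  classical
  have hP : P (runStart P j) := by
    by_contra h
    have := lt_runStart h ((runStart_le P j).lt_of_ne fun e => h (by rwa [e]))
    omega
  exact mem_runStarts.2 ⟨(runStart_le P j).trans_lt hjn, hP,
    Nat.findGreatest_spec (P := fun i => i = 0 ∨ ¬ P (i - 1)) (Nat.zero_le j) (Or.inl rfl)⟩

end Runs

section Transfer

variable {m g : ℕ} {T : List (ℕ × ℕ)} {P Q : ℕ → Prop}

lemma card_runStarts_le_of_traversal (hT : IsTraversal m g T) (hPQ : ∀ p ∈ T, P p.1 ↔ Q p.2)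
    (hQ : ∀ j, Q j → j < g) : #(runStarts P m) ≤ #(runStarts Q g) := by
  choose! f hfT hf using fun i (hi : i < m) => hT.exists_mem_fst_eq hi
  have hQf : ∀ i < m, P i → Q (f i).2 := fun i hi h => (hPQ _ (hfT i hi)).1 (by rwa [hf i hi])
  refine card_le_card_of_injOn (fun i => runStart Q (f i).2) (fun i hi => ?_)
    (StrictMonoOn.injOn fun i hi i' hi' hii' => ?_)
  · obtain ⟨him, hPi, -⟩ := mem_runStarts.1 hi
    exact runStart_mem_runStarts (hQf i him hPi) (hQ _ (hQf i him hPi))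
  · obtain ⟨him, hPi, -⟩ := mem_runStarts.1 hi
    obtain ⟨hi'm, hPi', hi'start⟩ := mem_runStarts.1 hi'
    have hPi'1 : ¬ P (i' - 1) := hi'start.resolve_left (by omega)
    -- the gap `i' - 1` before the run at `i'` is matched to a gap of `Q` strictly in between
    have hlt : i < i' - 1 := lt_of_le_of_ne (by omega) fun e => hPi'1 (e ▸ hPi)
    have hgap : ¬ Q (f (i' - 1)).2 := fun h =>
      hPi'1 (by simpa [hf (i' - 1) (by omega)] using (hPQ _ (hfT _ (by omega))).2 h)
    have h₁ : (f i).2 ≤ (f (i' - 1)).2 :=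
      hT.snd_le_of_fst_lt (hfT _ him) (hfT _ (by omega)) (by rw [hf _ him, hf _ (by omega)]; exact hlt)
    have h₂ : (f (i' - 1)).2 ≤ (f i').2 :=
      hT.snd_le_of_fst_lt (hfT _ (by omega)) (hfT _ hi'm) (by rw [hf _ hi'm, hf _ (by omega)]; omega)
    have h₁' : (f i).2 < (f (i' - 1)).2 := h₁.lt_of_ne fun e => hgap (e ▸ hQf i him hPi)
    have h₂' : (f (i' - 1)).2 < (f i').2 := h₂.lt_of_ne fun e => hgap (e ▸ hQf i' hi'm hPi')
    exact ((runStart_le Q _).trans_lt h₁').trans (lt_runStart hgap h₂')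

theorem card_runStarts_eq_of_traversal (hT : IsTraversal m g T) (hPQ : ∀ p ∈ T, P p.1 ↔ Q p.2)
    (hP : ∀ i, P i → i < m) (hQ : ∀ j, Q j → j < g) : #(runStarts P m) = #(runStarts Q g) :=
  (card_runStarts_le_of_traversal hT hPQ hQ).antisymm <|
    card_runStarts_le_of_traversal hT.swap (List.forall_mem_map.2 fun p hp => (hPQ p hp).symm) hP

end Transfer

open Classical in
lemma runStarts_eq_filter {P : ℕ → Prop} (hP : ∀ j, P (j + 1) → ¬ P j) (n : ℕ) :
    runStarts P n = (range n).filter P := by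
  ext j
  rw [mem_runStarts, mem_filter, Finset.mem_range]
  refine and_congr_right fun _ => and_iff_left_of_imp fun h => ?_
  cases j with
  | zero => exact Or.inl rfl
  | succ j => exact Or.inr (hP j h)

section Alternating

variable {α : Type*}

lemma length_alternating (x y : α) (n : ℕ) :
    (x :: (List.replicate n [y, x]).flatten).length = 2 * n + 1 := by
  simp [List.length_flatten, mul_comm]

lemma getD_alternating (x y d : α) {n j : ℕ} (hj : j < 2 * n + 1) :
    (x :: (List.replicate n [y, x]).flatten).getD j d = if j % 2 = 1 then y else x := by
  induction n generalizing j with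
  | zero =>
    obtain rfl : j = 0 := by omega
    rfl
  | succ n ih =>
    match j with
    | 0 => rfl
    | 1 => rfl
    | j + 2 =>
      rw [List.replicate_succ, List.flatten_cons, List.cons_append, List.cons_append,
        List.nil_append, List.getD_cons_succ, List.getD_cons_succ, ih (by omega)]
      simp [Nat.add_mod_right]

end Alternating

lemma card_filter_mod_two_eq_one_range (n : ℕ) : #{j ∈ range (2 * n + 1) | j % 2 = 1} = n := by
  induction n with
  | zero => rfl
  | succ n ih =>
    rw [show 2 * (n + 1) + 1 = 2 * n + 1 + 1 + 1 by ring, range_add_one, range_add_one,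
      filter_insert, filter_insert, if_neg (by omega), if_pos (by omega),
      card_insert_of_notMem (by simp), ih]

theorem card_runStarts_of_dDF_alternating_le {α : Type*} [PseudoMetricSpace α] [Inhabited α]
    {M : List α} {x y : α} {n : ℕ} {r : ℝ} {I : Set α}
    (h : dDF M (x :: (List.replicate n [y, x]).flatten) ≤ r)
    (hx : Disjoint (closedBall x r) I) (hy : closedBall y r ⊆ I) (hI : default ∉ I) :
    #(runStarts (fun i => M.getD i default ∈ I) M.length) = n := by
  obtain ⟨T, hT, hTr⟩ := exists_traversal_dist_le_dDF M (x :: (List.replicate n [y, x]).flatten)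
  rw [length_alternating] at hT
  have hPQ : ∀ p ∈ T, M.getD p.1 default ∈ I ↔ p.2 < 2 * n + 1 ∧ p.2 % 2 = 1 := by
    intro p hp
    have hp2 : p.2 < 2 * n + 1 := by have := (Prod.le_def.1 (hT.le_of_mem hp)).2; omega
    have hd := (hTr p hp).trans h
    rw [getD_alternating _ _ _ hp2] at hd
    split_ifs at hd with hodd
    · simpa [hp2, hodd] using hy hd
    · simpa [hodd] using hx.notMem_of_mem_left hd
  have hP : ∀ i, M.getD i default ∈ I → i < M.length := fun i hi => by
    by_contra! hlen
    exact hI (M.getD_eq_default default hlen ▸ hi)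
  rw [card_runStarts_eq_of_traversal (Q := fun j => j < 2 * n + 1 ∧ j % 2 = 1) hT hPQ hP
    fun _ hj => hj.1, runStarts_eq_filter (by omega)]
  convert card_filter_mod_two_eq_one_range n using 2
  ext j
  simp only [mem_filter, Finset.mem_range]
  omega

open scoped Classical in
theorem runs_count_of_close_to_gadgets (a b : ℕ) (M : List ℝ)
    (hA : dDF M (Aseq a) ≤ 1) (hB : dDF M (Bseq b) ≤ 1) :
    ((Finset.range M.length).filter (fun j =>
        M.getD j 0 ∈ Set.Icc (-4 : ℝ) (-2) ∧
        (j = 0 ∨ M.getD (j - 1) 0 ∉ Set.Icc (-4 : ℝ) (-2)))).card = a ∧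
    ((Finset.range M.length).filter (fun j =>
        M.getD j 0 ∈ Set.Icc (2 : ℝ) 4 ∧
        (j = 0 ∨ M.getD (j - 1) 0 ∉ Set.Icc (2 : ℝ) 4))).card = b ∧
    ∀ j < M.length, ¬(M.getD j 0 ∈ Set.Icc (-4 : ℝ) (-2) ∧
        M.getD j 0 ∈ Set.Icc (2 : ℝ) 4) := by
  have hball (c : ℝ) : closedBall c 1 = Icc (c - 1) (c + 1) := Real.closedBall_eq_Icc
  have hdefault : (default : ℝ) = 0 := rfl
  refine ⟨?_, ?_, fun j _ h => by linarith [h.1.2, h.2.1]⟩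
  · convert card_runStarts_of_dDF_alternating_le (x := 1) (y := -3) (I := Icc (-4) (-2)) hA
      (by rw [hball, Set.disjoint_left]; intro z hz hz'; linarith [hz.1, hz'.2])
      (by rw [hball]; norm_num) (by norm_num [hdefault]) using 2
    ext j
    simp [mem_runStarts, hdefault]
  · convert card_runStarts_of_dDF_alternating_le (x := -1) (y := 3) (I := Icc 2 4) hB
      (by rw [hball, Set.disjoint_left]; intro z hz hz'; linarith [hz.2, hz'.1])
      (by rw [hball]; norm_num) (by norm_num [hdefault]) using 2
    ext j
    simp [mem_runStarts, hdefault]
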